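/- arXiv:1811.03997 — 2 statements merged into one kernel-verified Lean document; each statement's English description precedes it below -/
import Mathlib

section
/- Let w̃ ∈ C²([0,1]) with w̃(0) = w̃(1) = 0, and define B(w̃) := ∫₀¹ (ε² w̃_xx² + w̃_x²) dx. Then ε ‖w̃_x‖_{L^∞}² ≤ (1 + ε) B(w̃). -/
/-!
Since `w(0) = w(1) = 0`, Rolle gives `ξ` with `w'(ξ) = 0`. Then
`ε w'(x)² = ∫_ξ^x 2ε w' w''`, and `|2ε w' w''| ≤ ε² w''² + w'²` pointwise, so
`ε w'(x)² ≤ B(w)`, which is even stronger than the claim.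
-/

open MeasureTheory Set intervalIntegral

lemma abs_mul_two_mul_le (ε a b : ℝ) : |ε * (2 * a * b)| ≤ ε ^ 2 * b ^ 2 + a ^ 2 := by
  rw [abs_le]
  constructor <;> nlinarith [sq_nonneg (ε * b + a), sq_nonneg (ε * b - a)]

lemma sq_sub_sq_eq_integral {f : ℝ → ℝ} (hf : ContDiff ℝ 1 f) (a b : ℝ) :
    f b ^ 2 - f a ^ 2 = ∫ y in a..b, 2 * f y * deriv f y := by
  obtain ⟨hdiff, hcont⟩ := contDiff_one_iff_deriv.mp hf
  refine (integral_eq_sub_of_hasDerivAt (f := fun y => f y ^ 2) (fun y _ => ?_) ?_).symm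
  · simpa [mul_comm, mul_assoc, mul_left_comm] using (hdiff y).hasDerivAt.fun_pow 2
  · exact ((continuous_const.mul hdiff.continuous).mul hcont).intervalIntegrable a b

theorem mul_sq_le_integral_of_eq_zero {f : ℝ → ℝ} (hf : ContDiff ℝ 1 f) (ε : ℝ) {a b ξ x : ℝ}
    (hξ : ξ ∈ Icc a b) (hx : x ∈ Icc a b) (hfξ : f ξ = 0) :
    ε * f x ^ 2 ≤ ∫ y in a..b, (ε ^ 2 * deriv f y ^ 2 + f y ^ 2) := by
  obtain ⟨hdiff, hcont⟩ := contDiff_one_iff_deriv.mp hf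
  have hsub : uIoc ξ x ⊆ Ioc a b :=
    Ioc_subset_Ioc (le_min hξ.1 hx.1) (max_le hξ.2 hx.2)
  calc ε * f x ^ 2 = ∫ y in ξ..x, ε * (2 * f y * deriv f y) := by
        rw [intervalIntegral.integral_const_mul, ← sq_sub_sq_eq_integral hf, hfξ]; ring
    _ ≤ ∫ y in uIoc ξ x, ‖ε * (2 * f y * deriv f y)‖ :=
        (Real.le_norm_self _).trans norm_integral_le_integral_norm_uIoc
    _ ≤ ∫ y in uIoc ξ x, (ε ^ 2 * deriv f y ^ 2 + f y ^ 2) := by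
        refine setIntegral_mono_on ?_ ?_ measurableSet_uIoc fun y _ => abs_mul_two_mul_le ε _ _
        · exact Continuous.integrableOn_uIoc (by fun_prop)
        · exact Continuous.integrableOn_uIoc (by fun_prop)
    _ ≤ ∫ y in Ioc a b, (ε ^ 2 * deriv f y ^ 2 + f y ^ 2) :=
        setIntegral_mono_set (Continuous.integrableOn_Ioc (by fun_prop))
          (Filter.Eventually.of_forall fun y => by positivity) hsub.eventuallyLE
    _ = ∫ y in a..b, (ε ^ 2 * deriv f y ^ 2 + f y ^ 2) :=
        (integral_of_le (hξ.1.trans hξ.2)).symm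

/-- For w̃ ∈ C²([0,1]) vanishing at the endpoints,
ε ‖w̃_x‖_{L^∞}² ≤ (1 + ε) B(w̃) where B(w̃) = ∫₀¹ (ε² w̃'' ² + w̃' ²). -/
theorem stmt5 (ε : ℝ) (hε : 0 < ε) (w : ℝ → ℝ) (hw : ContDiff ℝ 2 w)
    (h0 : w 0 = 0) (h1 : w 1 = 0) :
    ∀ x ∈ Set.Icc (0:ℝ) 1,
      ε * (deriv w x) ^ 2
        ≤ (1 + ε) * ∫ y in (0:ℝ)..1, (ε ^ 2 * (deriv (deriv w) y) ^ 2 + (deriv w y) ^ 2) := by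
  intro x hx
  obtain ⟨hdiff, -, hw'⟩ := contDiff_succ_iff_deriv.mp (show ContDiff ℝ (1 + 1) w from hw)
  obtain ⟨ξ, hξ, hw'ξ⟩ :=
    exists_deriv_eq_zero zero_lt_one hdiff.continuous.continuousOn (h0.trans h1.symm)
  have hB : 0 ≤ ∫ y in (0:ℝ)..1, (ε ^ 2 * deriv (deriv w) y ^ 2 + deriv w y ^ 2) :=
    integral_nonneg zero_le_one fun y _ => by positivity
  calc ε * deriv w x ^ 2
      ≤ ∫ y in (0:ℝ)..1, (ε ^ 2 * deriv (deriv w) y ^ 2 + deriv w y ^ 2) :=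
        mul_sq_le_integral_of_eq_zero hw' ε (Ioo_subset_Icc_self hξ) hx hw'ξ
    _ ≤ (1 + ε) * ∫ y in (0:ℝ)..1, (ε ^ 2 * deriv (deriv w) y ^ 2 + deriv w y ^ 2) :=
        le_mul_of_one_le_left hB (by linarith)
end

section
/- Let D ∈ ℝ^{N×N} be the matrix with entries D_{ij} = (−1)^{i−j} 4 l_{i+1} for i ≥ j and D_{ij} = 0 otherwise, where each l_j satisfies l_j > ε/ρ > 0. Then the maximum-norm operator norm of D⁻¹ satisfies ‖D⁻¹‖_∞ ≤ ρ/(2ε). -/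
lemma sum_if_val {N : ℕ} (t : Fin N) (c : ℝ) (f : Fin N → ℝ) :
    ∑ j : Fin N, (if (j:ℕ) = (t:ℕ) then c else 0) * f j = c * f t := by
  rw [Finset.sum_eq_single t]
  · simp
  · intro b _ hb
    simp [show ¬ ((b:ℕ) = (t:ℕ)) from fun h => hb (Fin.ext h)]
  · simp

lemma sum_if_pred_zero {N : ℕ} (i : Fin N) (hi : (i:ℕ) = 0) (d : ℝ) (f : Fin N → ℝ) :
    ∑ j : Fin N, (if (j:ℕ) + 1 = (i:ℕ) then d else 0) * f j = 0 := by
  apply Finset.sum_eq_zero; intro j _; simp [hi]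

lemma sum_if_pred {N : ℕ} (i : Fin N) (hi : (i:ℕ) ≠ 0) (d : ℝ) (f : Fin N → ℝ) :
    ∑ j : Fin N, (if (j:ℕ) + 1 = (i:ℕ) then d else 0) * f j
      = d * f ⟨(i:ℕ) - 1, lt_of_le_of_lt (Nat.pred_le _) i.isLt⟩ := by
  rw [Finset.sum_eq_single (⟨(i:ℕ) - 1, lt_of_le_of_lt (Nat.pred_le _) i.isLt⟩ : Fin N)]
  · rw [if_pos (by simp; omega)]
  · intro b _ hb
    have hb' : ¬ ((b:ℕ) + 1 = (i:ℕ)) := fun h => hb (Fin.ext (by simp; omega))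
    simp [hb']
  · simp

/-- max-norm operator bound ‖D⁻¹‖_∞ ≤ ρ/(2ε) for the layer matrix D,
when every interval length satisfies l_j > ε/ρ. -/
theorem stmt8 (N : ℕ) (hN : 1 ≤ N) (ε ρ : ℝ) (hε : 0 < ε) (hρ : 0 < ρ)
    (l : ℕ → ℝ) (hl : ∀ j, 2 ≤ j → j ≤ N + 1 → ε / ρ < l j)
    (D : Matrix (Fin N) (Fin N) ℝ)
    (hD : ∀ i j : Fin N, D i j =
      if (j : ℕ) ≤ (i : ℕ) then (-1 : ℝ) ^ ((i : ℕ) - (j : ℕ)) * (4 * l ((i : ℕ) + 2))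
      else 0) :
    ∀ (v : Fin N → ℝ) (M : ℝ), (∀ j, |v j| ≤ M) →
      ∀ i, |(D⁻¹).mulVec v i| ≤ ρ / (2 * ε) * M := by
  have hερ : 0 < ε / ρ := div_pos hε hρ
  have hlpos : ∀ j, 2 ≤ j → j ≤ N + 1 → 0 < l j := fun j h1 h2 => hερ.trans (hl j h1 h2)
  set E : Matrix (Fin N) (Fin N) ℝ := fun i j =>
    (if (j:ℕ) = (i:ℕ) then (4 * l ((i:ℕ)+2))⁻¹ else 0) +
    (if (j:ℕ) + 1 = (i:ℕ) then (4 * l ((i:ℕ)+1))⁻¹ else 0) with hE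
  have hl2 : ∀ i : Fin N, (4 * l ((i:ℕ)+2)) ≠ 0 := by
    intro i
    have := hlpos ((i:ℕ)+2) (by omega) (by have := i.isLt; omega)
    positivity
  have hmul : E * D = 1 := by
    ext i k
    rw [Matrix.mul_apply, Matrix.one_apply]
    simp only [hE]
    simp_rw [add_mul]
    rw [Finset.sum_add_distrib, sum_if_val]
    rcases Nat.eq_zero_or_pos (i:ℕ) with hi | hi
    · rw [sum_if_pred_zero i hi, add_zero, hD]
      rcases Nat.eq_zero_or_pos (k:ℕ) with hk | hk
      · have hik : i = k := Fin.ext (by omega)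
        simp only [hi, hk, if_pos (le_refl 0), Nat.sub_self, pow_zero, one_mul, hik, if_pos rfl]
        exact inv_mul_cancel₀ (hi ▸ hl2 i)
      · have hik : ¬ (i = k) := fun h => by omega
        simp only [hi, if_neg (by omega : ¬ (k:ℕ) ≤ 0), mul_zero, if_neg hik]
    · have hine : (i:ℕ) ≠ 0 := by omega
      rw [sum_if_pred i hine, hD, hD]
      set t : Fin N := ⟨(i:ℕ) - 1, lt_of_le_of_lt (Nat.pred_le _) i.isLt⟩ with ht
      have htv : (t:ℕ) = (i:ℕ) - 1 := rfl
      have hl3 : (4 * l ((t:ℕ)+2)) ≠ 0 := hl2 t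
      have hit : (t:ℕ) + 1 = (i:ℕ) := by omega
      rcases lt_trichotomy (k:ℕ) (i:ℕ) with hk | hk | hk
      · -- k < i : terms cancel
        have h1 : (k:ℕ) ≤ (i:ℕ) := le_of_lt hk
        have h2 : (k:ℕ) ≤ (t:ℕ) := by omega
        rw [if_pos h1, if_pos h2, if_neg (fun h : i = k => by omega)]
        have hpow : (i:ℕ) - (k:ℕ) = ((t:ℕ) - (k:ℕ)) + 1 := by omega
        have hli : (i:ℕ) + 1 = (t:ℕ) + 2 := by omega
        have key : ∀ (a x : ℝ), a ≠ 0 → a⁻¹ * (x * a) = x := fun a x ha => by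
          rw [mul_comm x a, inv_mul_cancel_left₀ ha]
        rw [hpow, hli, pow_succ, key _ _ (hl2 i), key _ _ hl3]
        ring
      · have hik : i = k := Fin.ext hk.symm
        rw [if_pos (le_of_eq hk), if_neg (by omega : ¬ (k:ℕ) ≤ (t:ℕ)), if_pos hik]
        rw [show (i:ℕ) - (k:ℕ) = 0 by omega, pow_zero, one_mul, mul_zero, add_zero]
        exact inv_mul_cancel₀ (hl2 i)
      · rw [if_neg (by omega : ¬ (k:ℕ) ≤ (i:ℕ)), if_neg (by omega : ¬ (k:ℕ) ≤ (t:ℕ)),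
          if_neg (fun h : i = k => by omega)]
        simp
  have hinv : D⁻¹ = E := Matrix.inv_eq_left_inv hmul
  intro v M hM
  have hM0 : 0 ≤ M := le_trans (abs_nonneg _) (hM ⟨0, hN⟩)
  rw [hinv]
  have hε' : ε ≠ 0 := ne_of_gt hε
  have hbound : ∀ j, 2 ≤ j → j ≤ N + 1 → (4 * l j)⁻¹ ≤ ρ / (4 * ε) := by
    intro j h1 h2
    have hlj := hlpos j h1 h2
    have hlj' := le_of_lt (hl j h1 h2)
    calc (4 * l j)⁻¹ ≤ (4 * (ε / ρ))⁻¹ := by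
          apply inv_anti₀ (by positivity)
          linarith
      _ = ρ / (4 * ε) := by field_simp
  have h24 : ρ / (4 * ε) ≤ ρ / (2 * ε) :=
    div_le_div_of_nonneg_left (le_of_lt hρ) (by positivity) (by linarith)
  have hiB : ∀ i : Fin N, (i:ℕ) + 2 ≤ N + 1 := fun i => by have := i.isLt; omega
  show ∀ i, |∑ j, E i j * v j| ≤ ρ / (2 * ε) * M
  intro i
  simp only [hE]
  simp_rw [add_mul]
  rw [Finset.sum_add_distrib, sum_if_val]
  have hc0 : 0 < l ((i:ℕ) + 2) := hlpos _ (by omega) (hiB i)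
  have hc : 0 ≤ (4 * l ((i:ℕ)+2))⁻¹ := by positivity
  have hcb : (4 * l ((i:ℕ)+2))⁻¹ ≤ ρ / (4 * ε) := hbound _ (by omega) (hiB i)
  rcases Nat.eq_zero_or_pos (i:ℕ) with hi | hi
  · rw [sum_if_pred_zero i hi, add_zero, abs_mul, abs_of_nonneg hc]
    calc (4 * l ((i:ℕ)+2))⁻¹ * |v i| ≤ (ρ / (4 * ε)) * M :=
          mul_le_mul hcb (hM i) (abs_nonneg _) (by positivity)
      _ ≤ ρ / (2 * ε) * M := mul_le_mul_of_nonneg_right h24 hM0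
  · rw [sum_if_pred i (by omega)]
    have hd0 : 0 < l ((i:ℕ) + 1) := hlpos _ (by omega) (by have := i.isLt; omega)
    have hd : 0 ≤ (4 * l ((i:ℕ)+1))⁻¹ := by positivity
    have hdb : (4 * l ((i:ℕ)+1))⁻¹ ≤ ρ / (4 * ε) := hbound _ (by omega) (by have := i.isLt; omega)
    calc |(4 * l ((i:ℕ)+2))⁻¹ * v i + (4 * l ((i:ℕ)+1))⁻¹ * v _| ≤
          |(4 * l ((i:ℕ)+2))⁻¹ * v i| + |(4 * l ((i:ℕ)+1))⁻¹ * v _| := abs_add_le _ _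
      _ = (4 * l ((i:ℕ)+2))⁻¹ * |v i| + (4 * l ((i:ℕ)+1))⁻¹ * |v _| := by
          rw [abs_mul, abs_mul, abs_of_nonneg hc, abs_of_nonneg hd]
      _ ≤ (ρ / (4 * ε)) * M + (ρ / (4 * ε)) * M :=
          add_le_add (mul_le_mul hcb (hM i) (abs_nonneg _) (by positivity))
            (mul_le_mul hdb (hM _) (abs_nonneg _) (by positivity))
      _ = ρ / (2 * ε) * M := by field_simp; ring
end
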